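/- arXiv:1112.5868 — 4 statements merged into one kernel-verified Lean document; each statement's English description precedes it below -/
import Mathlib

section
/- If A is a strictly diagonally dominant (SDD) complex n×n matrix (|a_ii| > Σ_{j≠i} |a_ij| for all i), then A is nonsingular and ‖A⁻¹‖_∞ ≤ 1 / min_i (|a_ii| − r_i(A)), where r_i(A) = Σ_{j≠i} |a_ij|. -/
open Matrix

attribute [local instance] Matrix.linftyOpNormedAddCommGroup

/-- Deleted i-th row sum r_i(A). -/
noncomputable def rowSum {n : ℕ} (A : Matrix (Fin n) (Fin n) ℂ) (i : Fin n) : ℝ :=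
  ∑ j ∈ Finset.univ.erase i, ‖A i j‖

/-- Recursive Nekrasov quantities h_i(A). -/
noncomputable def nekH {n : ℕ} (A : Matrix (Fin n) (Fin n) ℂ) : Fin n → ℝ :=
  fun i =>
    (∑ j : {j : Fin n // j < i}, ‖A i j.1‖ * nekH A j.1 / ‖A j.1 j.1‖) +
      ∑ j ∈ Finset.univ.filter (fun j => i < j), ‖A i j‖
  termination_by i => (i : ℕ)
  decreasing_by exact j.2

/-- Recursive quantities z_i(A). -/
noncomputable def nekZ {n : ℕ} (A : Matrix (Fin n) (Fin n) ℂ) : Fin n → ℝ :=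
  fun i => (∑ j : {j : Fin n // j < i}, ‖A i j.1‖ / ‖A j.1 j.1‖ * nekZ A j.1) + 1
  termination_by i => (i : ℕ)
  decreasing_by exact j.2

/-- |D| : entrywise absolute value of the diagonal part. -/
noncomputable def absD {n : ℕ} (A : Matrix (Fin n) (Fin n) ℂ) : Matrix (Fin n) (Fin n) ℝ :=
  Matrix.of fun i j => if i = j then ‖A i j‖ else 0

/-- |L| : entrywise absolute value of the strictly lower triangular part. -/
noncomputable def absL {n : ℕ} (A : Matrix (Fin n) (Fin n) ℂ) : Matrix (Fin n) (Fin n) ℝ :=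
  Matrix.of fun i j => if j < i then ‖A i j‖ else 0

/-- |U| : entrywise absolute value of the strictly upper triangular part. -/
noncomputable def absU {n : ℕ} (A : Matrix (Fin n) (Fin n) ℂ) : Matrix (Fin n) (Fin n) ℝ :=
  Matrix.of fun i j => if i < j then ‖A i j‖ else 0

/-- Comparison matrix ⟨A⟩. -/
noncomputable def cmpM {n : ℕ} (A : Matrix (Fin n) (Fin n) ℂ) : Matrix (Fin n) (Fin n) ℝ :=
  Matrix.of fun i j => if i = j then ‖A i j‖ else -‖A i j‖

lemma varah_key {n : ℕ} (hn : 0 < n) (A : Matrix (Fin n) (Fin n) ℂ)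
    (hSDD : ∀ i, rowSum A i < ‖A i i‖) (v : Fin n → ℂ) :
    (⨅ i, (‖A i i‖ - rowSum A i)) * ‖v‖ ≤ ‖A *ᵥ v‖ := by
  have : Nonempty (Fin n) := ⟨⟨0, hn⟩⟩
  obtain ⟨i, -, hi⟩ := Finset.exists_mem_eq_sup (Finset.univ : Finset (Fin n))
    Finset.univ_nonempty (fun i => ‖v i‖₊)
  have hv_eq : ‖v‖ = ‖v i‖ := by rw [Pi.norm_def, hi]; rfl
  have hbdd : BddBelow (Set.range fun i => ‖A i i‖ - rowSum A i) :=
    Set.Finite.bddBelow (Set.finite_range _)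
  have hinf_le : (⨅ i, (‖A i i‖ - rowSum A i)) ≤ ‖A i i‖ - rowSum A i := ciInf_le hbdd i
  set S := ∑ j ∈ Finset.univ.erase i, A i j * v j with hS
  have hsplit : (A *ᵥ v) i = A i i * v i + S := by
    simp only [mulVec, dotProduct, hS]
    exact (Finset.add_sum_erase _ _ (Finset.mem_univ i)).symm
  have h1 : ‖A i i * v i‖ - ‖S‖ ≤ ‖(A *ᵥ v) i‖ := by
    rw [hsplit]
    have h := norm_sub_le (A i i * v i + S) S
    rw [add_sub_cancel_right] at h
    linarith
  have h2 : ‖S‖ ≤ rowSum A i * ‖v‖ := by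
    calc ‖S‖ ≤ ∑ j ∈ Finset.univ.erase i, ‖A i j * v j‖ := norm_sum_le _ _
      _ ≤ ∑ j ∈ Finset.univ.erase i, ‖A i j‖ * ‖v‖ := by
          refine Finset.sum_le_sum fun j _ => ?_
          rw [norm_mul]
          exact mul_le_mul_of_nonneg_left (norm_le_pi_norm v j) (norm_nonneg _)
      _ = rowSum A i * ‖v‖ := by rw [rowSum, Finset.sum_mul]
  have h3 : ‖A i i * v i‖ = ‖A i i‖ * ‖v‖ := by rw [norm_mul, hv_eq]
  have step1 : (‖A i i‖ - rowSum A i) * ‖v‖ ≤ ‖(A *ᵥ v) i‖ := by nlinarith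
  calc (⨅ i, (‖A i i‖ - rowSum A i)) * ‖v‖
      ≤ (‖A i i‖ - rowSum A i) * ‖v‖ :=
        mul_le_mul_of_nonneg_right hinf_le (norm_nonneg v)
    _ ≤ ‖(A *ᵥ v) i‖ := step1
    _ ≤ ‖A *ᵥ v‖ := norm_le_pi_norm _ i

/-- Varah's bound: an SDD matrix is nonsingular and
    ‖A⁻¹‖_∞ ≤ 1 / min_i (|a_ii| − r_i(A)). -/
theorem stmt0 {n : ℕ} (hn : 0 < n) (A : Matrix (Fin n) (Fin n) ℂ)
    (hSDD : ∀ i, rowSum A i < ‖A i i‖) :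
    IsUnit A ∧ ‖A⁻¹‖ ≤ 1 / ⨅ i, (‖A i i‖ - rowSum A i) := by
  have : Nonempty (Fin n) := ⟨⟨0, hn⟩⟩
  set α := ⨅ i, (‖A i i‖ - rowSum A i) with hα
  have hαpos : 0 < α := by
    obtain ⟨i0, hi0⟩ := Finite.exists_min fun i => ‖A i i‖ - rowSum A i
    have h1 : (‖A i0 i0‖ - rowSum A i0) ≤ α := le_ciInf hi0
    linarith [hSDD i0]
  have hinj : Function.Injective A.mulVec := by
    intro x y hxy
    have h0 : A *ᵥ (x - y) = 0 := by rw [Matrix.mulVec_sub, hxy, sub_self]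
    have hk := varah_key hn A hSDD (x - y)
    rw [h0, norm_zero, ← hα] at hk
    have hz : ‖x - y‖ = 0 := by nlinarith [norm_nonneg (x - y)]
    rwa [norm_eq_zero, sub_eq_zero] at hz
  have hA : IsUnit A := Matrix.mulVec_injective_iff_isUnit.mp hinj
  refine ⟨hA, ?_⟩
  rw [Matrix.linfty_opNorm_eq_opNorm]
  refine ContinuousLinearMap.opNorm_le_bound _ (by positivity) fun y => ?_
  have hAy : A *ᵥ (A⁻¹ *ᵥ y) = y := by
    rw [Matrix.mulVec_mulVec, Matrix.mul_nonsing_inv A (hA.map Matrix.detMonoidHom),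
      Matrix.one_mulVec]
  have hk := varah_key hn A hSDD (A⁻¹ *ᵥ y)
  rw [hAy, ← hα] at hk
  have heq : (ContinuousLinearMap.mk (Matrix.mulVecLin A⁻¹)) y = A⁻¹ *ᵥ y := rfl
  rw [heq, one_div]
  rw [inv_mul_eq_div, le_div_iff₀ hαpos]
  linarith [hk, mul_comm α ‖A⁻¹ *ᵥ y‖]
end

section
/- For any A ∈ ℂ^{n×n}, n ≥ 2, with nonzero diagonal entries, h_i(A) = |a_ii| · [(|D| − |L|)⁻¹ |U| e]_i for every i, where A = D − L − U is the splitting into diagonal, strictly lower and strictly upper triangular parts, |M| denotes the entrywise absolute value, and e is the all-ones vector. -/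
open Matrix

attribute [local instance] Matrix.linftyOpNormedAddCommGroup

lemma ml_inv {n : ℕ} (A : Matrix (Fin n) (Fin n) ℂ) (hdiag : ∀ i, A i i ≠ 0) :
    IsUnit (absD A - absL A).det := by
  have ht : (absD A - absL A).BlockTriangular OrderDual.toDual := by
    intro i j hij
    have h1 : i < j := hij
    simp [absD, absL, Matrix.sub_apply, h1.ne, not_lt.2 h1.le]
  rw [Matrix.det_of_lowerTriangular _ ht]
  refine isUnit_iff_ne_zero.2 (Finset.prod_ne_zero_iff.2 fun i _ => ?_)
  have : (absD A - absL A) i i = ‖A i i‖ := by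
    simp [absD, absL, Matrix.sub_apply]
  rw [this]
  exact norm_ne_zero_iff.2 (hdiag i)

lemma key_eq {n : ℕ} (A : Matrix (Fin n) (Fin n) ℂ) (hdiag : ∀ i, A i i ≠ 0) :
    (absD A - absL A) *ᵥ (fun i => nekH A i / ‖A i i‖) = absU A *ᵥ (1 : Fin n → ℝ) := by
  funext i
  have hne : ‖A i i‖ ≠ 0 := norm_ne_zero_iff.2 (hdiag i)
  simp only [Matrix.mulVec, dotProduct, Matrix.sub_apply, absD, absL, absU, Matrix.of_apply,
    sub_mul, Finset.sum_sub_distrib, ite_mul, zero_mul, Pi.one_apply, mul_one]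
  rw [Finset.sum_ite_eq Finset.univ i, if_pos (Finset.mem_univ i),
    mul_div_cancel₀ _ hne]
  have hlow : (∑ j : Fin n, if j < i then ‖A i j‖ * (nekH A j / ‖A j j‖) else 0)
      = ∑ j : {j : Fin n // j < i}, ‖A i j.1‖ * nekH A j.1 / ‖A j.1 j.1‖ := by
    rw [← Finset.sum_filter]
    simp only [mul_div_assoc]
    exact Finset.sum_subtype _ (fun j => by simp) _
  rw [hlow]
  have hup : (∑ j : Fin n, if i < j then ‖A i j‖ else 0)
      = ∑ j ∈ Finset.univ.filter (fun j => i < j), ‖A i j‖ := by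
    rw [← Finset.sum_filter]
  rw [hup, nekH]
  ring

/-- Robert's lemma: h_i(A) = |a_ii| · [(|D|−|L|)⁻¹ |U| e]_i. -/
theorem stmt2 {n : ℕ} (hn : 2 ≤ n) (A : Matrix (Fin n) (Fin n) ℂ)
    (hdiag : ∀ i, A i i ≠ 0) :
    ∀ i, nekH A i = ‖A i i‖ * (((absD A - absL A)⁻¹ * absU A) *ᵥ (1 : Fin n → ℝ)) i := by
  intro i
  have hu := ml_inv A hdiag
  have h1 : ((absD A - absL A)⁻¹ * absU A) *ᵥ (1 : Fin n → ℝ)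
      = (absD A - absL A)⁻¹ *ᵥ (absU A *ᵥ 1) := by
    rw [Matrix.mulVec_mulVec]
  have h2 : (absD A - absL A)⁻¹ *ᵥ (absU A *ᵥ 1)
      = (fun i => nekH A i / ‖A i i‖) := by
    rw [← key_eq A hdiag, Matrix.mulVec_mulVec, Matrix.nonsing_inv_mul _ hu, Matrix.one_mulVec]
  rw [h1, h2, mul_comm, div_mul_cancel₀ _ (norm_ne_zero_iff.2 (hdiag i))]
end

section
/- A matrix A ∈ ℂ^{n×n}, n ≥ 2, with nonzero diagonal is a Nekrasov matrix (|a_ii| > h_i(A) for all i) if and only if (|D| − |L|)⁻¹ |U| e < e componentwise, where A = D − L − U is the standard triangular splitting and e is the all-ones vector. -/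
open Matrix

attribute [local instance] Matrix.linftyOpNormedAddCommGroup

lemma nekH_eq {n : ℕ} (A : Matrix (Fin n) (Fin n) ℂ) (i : Fin n) :
    nekH A i = (∑ j ∈ Finset.univ.filter (fun j => j < i), ‖A i j‖ * nekH A j / ‖A j j‖)
      + ∑ j ∈ Finset.univ.filter (fun j => i < j), ‖A i j‖ := by
  rw [nekH]
  congr 1
  exact (Finset.sum_subtype (p := fun j => j < i) (Finset.univ.filter (fun j => j < i))
    (fun j => by simp) (fun j => ‖A i j‖ * nekH A j / ‖A j j‖)).symm

/-- Szulc's characterization: A is Nekrasov iff (|D|−|L|)⁻¹|U| e < e componentwise. -/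
theorem stmt3 {n : ℕ} (hn : 2 ≤ n) (A : Matrix (Fin n) (Fin n) ℂ)
    (hdiag : ∀ i, A i i ≠ 0) :
    (∀ i, nekH A i < ‖A i i‖) ↔
      (∀ i, (((absD A - absL A)⁻¹ * absU A) *ᵥ (1 : Fin n → ℝ)) i < 1) := by
  have hpos : ∀ i : Fin n, (0:ℝ) < ‖A i i‖ := fun i => norm_pos_iff.mpr (hdiag i)
  set M : Matrix (Fin n) (Fin n) ℝ := absD A - absL A with hMdef
  have hMtri : M.BlockTriangular OrderDual.toDual := by
    intro i j h
    have hij : i < j := h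
    simp [hMdef, absD, absL, Matrix.sub_apply, hij.ne, not_lt.mpr hij.le,
      asymm hij]
  have hdet : IsUnit M.det := by
    rw [Matrix.det_of_lowerTriangular M hMtri]
    refine isUnit_iff_ne_zero.mpr (Finset.prod_ne_zero_iff.mpr fun i _ => ?_)
    have : M i i = ‖A i i‖ := by simp [hMdef, absD, absL, Matrix.sub_apply]
    rw [this]
    exact (hpos i).ne'
  set x : Fin n → ℝ := fun i => nekH A i / ‖A i i‖ with hxdef
  have hMx : M *ᵥ x = absU A *ᵥ (1 : Fin n → ℝ) := by
    funext i
    have hdiagsum : ∑ j, (if i = j then ‖A i j‖ else 0) * x j = ‖A i i‖ * x i := by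
      rw [Finset.sum_eq_single i]
      · simp
      · intro j _ hj; simp [Ne.symm hj]
      · simp
    have hlowsum : ∑ j, (if j < i then ‖A i j‖ else 0) * x j
        = ∑ j ∈ Finset.univ.filter (fun j => j < i), ‖A i j‖ * x j := by
      rw [Finset.sum_filter]
      congr 1; funext j
      by_cases h : j < i <;> simp [h]
    have hux : (absU A *ᵥ (1 : Fin n → ℝ)) i
        = ∑ j ∈ Finset.univ.filter (fun j => i < j), ‖A i j‖ := by
      simp only [Matrix.mulVec, dotProduct, absU, Matrix.of_apply, Pi.one_apply, mul_one]
      rw [Finset.sum_filter]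
    rw [hux]
    have hexp : (M *ᵥ x) i = ‖A i i‖ * x i
        - ∑ j ∈ Finset.univ.filter (fun j => j < i), ‖A i j‖ * x j := by
      simp only [Matrix.mulVec, dotProduct, hMdef, Matrix.sub_apply, absD, absL,
        Matrix.of_apply, sub_mul, Finset.sum_sub_distrib]
      rw [hdiagsum, hlowsum]
    rw [hexp]
    have h1 : ‖A i i‖ * x i = nekH A i := by
      simp only [hxdef]
      field_simp
      exact mul_div_cancel_left₀ _ (hpos i).ne'
    have h2 : ∀ j, ‖A i j‖ * x j = ‖A i j‖ * nekH A j / ‖A j j‖ := by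
      intro j; simp only [hxdef]; ring
    rw [h1]
    simp_rw [h2]
    rw [nekH_eq A i]
    ring
  have hkey : ((M⁻¹ * absU A) *ᵥ (1 : Fin n → ℝ)) = x := by
    rw [← Matrix.mulVec_mulVec, ← hMx, Matrix.mulVec_mulVec, Matrix.nonsing_inv_mul M hdet,
      Matrix.one_mulVec]
  rw [hkey]
  constructor
  · intro h i
    exact (div_lt_one (hpos i)).mpr (h i)
  · intro h i
    exact (div_lt_one (hpos i)).mp (h i)
end

section
/- If A ∈ ℂ^{n×n}, n ≥ 2, is a Nekrasov matrix, then the matrix C := E − (|D|−|L|)⁻¹|U| satisfies: all entries of (|D|−|L|)⁻¹|U| are nonnegative, all its diagonal entries are less than 1, and for each i, |c_ii| − r_i(C) = 1 − h_i(A)/|a_ii| > 0. -/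
open Matrix

attribute [local instance] Matrix.linftyOpNormedAddCommGroup

theorem nekH_nonneg {n : ℕ} (A : Matrix (Fin n) (Fin n) ℂ) : ∀ i : Fin n, 0 ≤ nekH A i :=
  fun i => by
    rw [nekH]
    apply add_nonneg
    · apply Finset.sum_nonneg
      intro j _
      have h := nekH_nonneg A j.1
      positivity
    · apply Finset.sum_nonneg; intro j _; positivity
  termination_by i => (i : ℕ)
  decreasing_by exact j.2

noncomputable def invM {n : ℕ} (A : Matrix (Fin n) (Fin n) ℂ) : Fin n → Fin n → ℝ :=
  fun i j =>
    ((if i = j then 1 else 0) + ∑ k : {k : Fin n // k < i}, ‖A i k.1‖ * invM A k.1 j) / ‖A i i‖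
  termination_by i => (i : ℕ)
  decreasing_by exact k.2

theorem invM_nonneg {n : ℕ} (A : Matrix (Fin n) (Fin n) ℂ) : ∀ i j : Fin n, 0 ≤ invM A i j :=
  fun i j => by
    rw [invM]
    apply div_nonneg _ (norm_nonneg _)
    apply add_nonneg
    · positivity
    · apply Finset.sum_nonneg
      intro k _
      have h := invM_nonneg A k.1 j
      positivity
  termination_by i _ => (i : ℕ)
  decreasing_by exact k.2

theorem sum_lt_subtype {n : ℕ} (i : Fin n) (f : Fin n → ℝ) :
    (∑ k : {k : Fin n // k < i}, f k.1) = ∑ k ∈ Finset.univ.filter (fun k => k < i), f k :=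
  (Finset.sum_subtype (p := fun k => k < i) (Finset.univ.filter (fun k => k < i)) (by simp) f).symm

theorem invM_spec {n : ℕ} (A : Matrix (Fin n) (Fin n) ℂ) (i j : Fin n) (hA : ‖A i i‖ ≠ 0) :
    ‖A i i‖ * invM A i j
      = (if i = j then 1 else 0) + ∑ k : {k : Fin n // k < i}, ‖A i k.1‖ * invM A k.1 j := by
  rw [invM, mul_div_cancel₀ _ hA]

theorem M_mul_invM {n : ℕ} (A : Matrix (Fin n) (Fin n) ℂ) (hA : ∀ i, ‖A i i‖ ≠ 0) :
    (absD A - absL A) * Matrix.of (invM A) = 1 := by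
  ext i j
  rw [Matrix.mul_apply]
  have step : ∀ k, (absD A - absL A) i k * Matrix.of (invM A) k j
      = (if i = k then ‖A i i‖ * invM A k j else 0)
        - (if k < i then ‖A i k‖ * invM A k j else 0) := by
    intro k
    simp only [absD, absL, Matrix.sub_apply, Matrix.of_apply, sub_mul, ite_mul, zero_mul]
    congr 1
    by_cases h : i = k
    · subst h; rfl
    · simp [h]
  rw [Finset.sum_congr rfl (fun k _ => step k), Finset.sum_sub_distrib,
    Finset.sum_ite_eq Finset.univ i (fun k => ‖A i i‖ * invM A k j)]
  simp only [Finset.mem_univ, if_true]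
  rw [← Finset.sum_filter, ← sum_lt_subtype i (fun k => ‖A i k‖ * invM A k j), invM_spec A i j (hA i)]
  simp [Matrix.one_apply]

noncomputable def uRow {n : ℕ} (A : Matrix (Fin n) (Fin n) ℂ) (k : Fin n) : ℝ :=
  ∑ j ∈ Finset.univ.filter (fun j => k < j), ‖A k j‖

theorem invM_rowsum {n : ℕ} (A : Matrix (Fin n) (Fin n) ℂ) (hA : ∀ l : Fin n, ‖A l l‖ ≠ 0) :
    ∀ i : Fin n, ∑ k, invM A i k * uRow A k = nekH A i / ‖A i i‖ :=
  fun i => by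
    have key : ‖A i i‖ * ∑ k, invM A i k * uRow A k = nekH A i := by
      rw [Finset.mul_sum]
      have e1 : ∀ k, ‖A i i‖ * (invM A i k * uRow A k)
          = (if i = k then uRow A k else 0)
            + ∑ l : {l : Fin n // l < i}, ‖A i l.1‖ * invM A l.1 k * uRow A k := by
        intro k
        rw [← mul_assoc, invM_spec A i k (hA i), add_mul, ite_mul, one_mul, zero_mul,
          Finset.sum_mul]
      rw [Finset.sum_congr rfl (fun k _ => e1 k), Finset.sum_add_distrib,
        Finset.sum_ite_eq Finset.univ i (fun k => uRow A k)]
      simp only [Finset.mem_univ, if_true]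
      rw [Finset.sum_comm]
      have e2 : ∀ l : {l : Fin n // l < i},
          (∑ k, ‖A i l.1‖ * invM A l.1 k * uRow A k) = ‖A i l.1‖ * nekH A l.1 / ‖A l.1 l.1‖ := by
        intro l
        have ih := invM_rowsum A hA l.1
        simp only [mul_assoc, ← Finset.mul_sum, ih, mul_div_assoc]
      rw [Finset.sum_congr rfl (fun l _ => e2 l), nekH, add_comm, uRow]
    rw [eq_div_iff (hA i), mul_comm]
    exact key
  termination_by i => (i : ℕ)
  decreasing_by exact l.2

/-- For a Nekrasov matrix, C := E − (|D|−|L|)⁻¹|U| has nonnegative matrix part,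
    diagonal entries of (|D|−|L|)⁻¹|U| less than 1, and
    |c_ii| − r_i(C) = 1 − h_i(A)/|a_ii| > 0. -/
theorem stmt5 {n : ℕ} (hn : 2 ≤ n) (A : Matrix (Fin n) (Fin n) ℂ)
    (hNek : ∀ i, nekH A i < ‖A i i‖) :
    (∀ i j, 0 ≤ ((absD A - absL A)⁻¹ * absU A) i j) ∧
    (∀ i, ((absD A - absL A)⁻¹ * absU A) i i < 1) ∧
    (∀ i, |((1 : Matrix (Fin n) (Fin n) ℝ) - (absD A - absL A)⁻¹ * absU A) i i|
        - ∑ j ∈ Finset.univ.erase i, |((1 : Matrix (Fin n) (Fin n) ℝ) - (absD A - absL A)⁻¹ * absU A) i j|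
        = 1 - nekH A i / ‖A i i‖) ∧
    (∀ i, 0 < 1 - nekH A i / ‖A i i‖) := by
  have apos : ∀ i : Fin n, 0 < ‖A i i‖ := fun i => lt_of_le_of_lt (nekH_nonneg A i) (hNek i)
  have hA : ∀ i : Fin n, ‖A i i‖ ≠ 0 := fun i => ne_of_gt (apos i)
  have hinv : (absD A - absL A)⁻¹ = Matrix.of (invM A) :=
    Matrix.inv_eq_right_inv (M_mul_invM A hA)
  set P : Matrix (Fin n) (Fin n) ℝ := (absD A - absL A)⁻¹ * absU A with hP
  have hPapp : ∀ i j, P i j = ∑ k, invM A i k * absU A k j := by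
    intro i j
    rw [hP, hinv, Matrix.mul_apply]
    rfl
  have hPnn : ∀ i j, 0 ≤ P i j := by
    intro i j
    rw [hPapp]
    apply Finset.sum_nonneg
    intro k _
    apply mul_nonneg (invM_nonneg A i k)
    simp only [absU, Matrix.of_apply]
    split <;> simp [norm_nonneg]
  have hUrow : ∀ k : Fin n, (∑ j, absU A k j) = uRow A k := by
    intro k
    rw [uRow, Finset.sum_filter]
    rfl
  have hrow : ∀ i : Fin n, (∑ j, P i j) = nekH A i / ‖A i i‖ := by
    intro i
    calc (∑ j, P i j) = ∑ j, ∑ k, invM A i k * absU A k j :=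
          Finset.sum_congr rfl (fun j _ => hPapp i j)
      _ = ∑ k, ∑ j, invM A i k * absU A k j := Finset.sum_comm
      _ = ∑ k, invM A i k * uRow A k := by
          refine Finset.sum_congr rfl (fun k _ => ?_)
          rw [← Finset.mul_sum, hUrow]
      _ = nekH A i / ‖A i i‖ := invM_rowsum A hA i
  have hfrac : ∀ i : Fin n, nekH A i / ‖A i i‖ < 1 := fun i => (div_lt_one (apos i)).mpr (hNek i)
  have hdiag : ∀ i : Fin n, P i i < 1 := by
    intro i
    calc P i i ≤ ∑ j, P i j :=
          Finset.single_le_sum (fun j _ => hPnn i j) (Finset.mem_univ i)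
      _ = nekH A i / ‖A i i‖ := hrow i
      _ < 1 := hfrac i
  refine ⟨hPnn, hdiag, ?_, fun i => by linarith [hfrac i]⟩
  intro i
  have hdd : ((1 : Matrix (Fin n) (Fin n) ℝ) - P) i i = 1 - P i i := by
    simp [Matrix.sub_apply, Matrix.one_apply]
  have hod : ∀ j ∈ Finset.univ.erase i, |((1 : Matrix (Fin n) (Fin n) ℝ) - P) i j| = P i j := by
    intro j hj
    have hne : i ≠ j := fun h => (Finset.mem_erase.mp hj).1 h.symm
    rw [Matrix.sub_apply, Matrix.one_apply_ne hne, zero_sub, abs_neg, abs_of_nonneg (hPnn i j)]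
  rw [hdd, abs_of_nonneg (by linarith [hdiag i]), Finset.sum_congr rfl hod, ← hrow i,
    ← Finset.sum_erase_add Finset.univ _ (Finset.mem_univ i)]
  ring
end
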